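/- Let X and Y be Tychonoff spaces. The space C_p(X×Y, σ) is isomorphic (linearly homeomorphic) to the space C_p(X, C_p(Y)). -/

import Mathlib

open Filter Topology

set_option linter.unusedVariables false

/-- `C_p(X, E)`: the submodule of `X → E` (with the product, i.e. pointwise, topology)
consisting of all continuous functions from `X` to `E`.  The coerced type `↥(Cp X E)` carries
the subspace topology, i.e. the topology of pointwise convergence. -/
def Cp (X E : Type*) [TopologicalSpace X] [TopologicalSpace E]
    [AddCommGroup E] [Module ℝ E] [ContinuousAdd E] [ContinuousSMul ℝ E] :
    Submodule ℝ (X → E) where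
  carrier := {f | Continuous f}
  add_mem' hf hg := hf.add hg
  zero_mem' := continuous_const
  smul_mem' c f hf := hf.const_smul c

/-- `(c₀)_p`: the space of real sequences converging to `0`, as a submodule of `ℕ → ℝ`;
the coerced type carries the topology of pointwise convergence inherited from `ℝ^ℕ`. -/
def c0p : Submodule ℝ (ℕ → ℝ) where
  carrier := {x | Tendsto x atTop (𝓝 0)}
  add_mem' hx hy := by simpa [Pi.add_def] using Filter.Tendsto.add hx hy
  zero_mem' := tendsto_const_nhds
  smul_mem' c x hx := by simpa [Pi.smul_def, smul_eq_mul] using Filter.Tendsto.const_smul hx c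

/-- A topological vector space `E` contains a complemented copy of `F`: there is a closed
linear subspace `E₁` of `E` which is linearly homeomorphic to `F` and a continuous linear
projection from `E` onto `E₁`. -/
def HasComplementedCopy (E : Type*) [TopologicalSpace E] [AddCommGroup E] [Module ℝ E]
    (F : Type*) [TopologicalSpace F] [AddCommGroup F] [Module ℝ F] : Prop :=
  ∃ E₁ : Submodule ℝ E, IsClosed (E₁ : Set E) ∧ Nonempty (E₁ ≃L[ℝ] F) ∧
    ∃ P : E →L[ℝ] E, Set.range P = (E₁ : Set E) ∧ ∀ x ∈ E₁, P x = x

/-- A function `f : X × Y → ℝ` is separately continuous. -/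
def SepCont {X Y : Type*} [TopologicalSpace X] [TopologicalSpace Y] (f : X × Y → ℝ) : Prop :=
  (∀ x, Continuous fun y => f (x, y)) ∧ (∀ y, Continuous fun x => f (x, y))

/-- `SC_p(X × Y)`: the submodule of `X × Y → ℝ` consisting of all separately continuous
functions; the coerced type carries the topology of pointwise convergence. -/
def SCp (X Y : Type*) [TopologicalSpace X] [TopologicalSpace Y] : Submodule ℝ (X × Y → ℝ) where
  carrier := {f | SepCont f}
  add_mem' hf hg := ⟨fun x => (hf.1 x).add (hg.1 x), fun y => (hf.2 y).add (hg.2 y)⟩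
  zero_mem' := ⟨fun _ => continuous_const, fun _ => continuous_const⟩
  smul_mem' c f hf := ⟨fun x => (hf.1 x).const_smul c, fun y => (hf.2 y).const_smul c⟩

/-- The topology `σ` on `X × Y`: the coarsest topology making every separately continuous
real-valued function on `X × Y` continuous. -/
def sigmaTop (X Y : Type*) [TopologicalSpace X] [TopologicalSpace Y] :
    TopologicalSpace (X × Y) :=
  ⨅ f : {f : X × Y → ℝ // SepCont f}, TopologicalSpace.induced f.1 inferInstance

/-- The action of a finite linear combination `μ = Σ_z μ(z)·δ_z` of Dirac functionals
on a function `f`. -/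
noncomputable def finComboApply {Z : Type*} (μ : Z →₀ ℝ) (f : Z → ℝ) : ℝ :=
  μ.sum fun z a => a * f z

/-- `μ` is a JN-sequence on the topological space `Z`: each `μ n` is a finite linear
combination of Dirac functionals of norm `Σ_z |μ n z| = 1`, and `μ n (f) → 0` for every
continuous `f : Z → ℝ`. -/
def IsJNSeq (Z : Type*) [TopologicalSpace Z] (μ : ℕ → Z →₀ ℝ) : Prop :=
  (∀ n, ((μ n).sum fun _ a => |a|) = 1) ∧
    ∀ f : Z → ℝ, Continuous f → Tendsto (fun n => finComboApply (μ n) f) atTop (𝓝 0)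

/-- `Z` admits a JN-sequence. -/
def HasJNSeq (Z : Type*) [TopologicalSpace Z] : Prop := ∃ μ, IsJNSeq Z μ

/-- A space is pseudocompact if every continuous real-valued function on it is bounded. -/
def Pseudocompact (Z : Type*) [TopologicalSpace Z] : Prop :=
  ∀ f : Z → ℝ, Continuous f → Bornology.IsBounded (Set.range f)

/-- The action of a finite linear combination `Σ_{(x,y)} ν(x,y)·(δ_x ⊗ δ_y)` of tensor
products of Dirac functionals on an element of `C_p(X, C_p(Y))`. -/
noncomputable def tensorApply {X Y : Type*} [TopologicalSpace X] [TopologicalSpace Y]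
    (ν : (X × Y) →₀ ℝ) (f : ↥(Cp X ↥(Cp Y ℝ))) : ℝ :=
  ν.sum fun p a => a * (f.1 p.1).1 p.2

/-!
Since `σ` is the initial topology of the separately continuous functions, its continuous
functions are exactly the separately continuous ones (Henriksen–Woods). Currying sends a
separately continuous `f` to the continuous map `x ↦ f (x, ·)` into `C_p(Y)`, and it is a
homeomorphism because both pointwise topologies are generated by the evaluations at the
points `(x, y)`.
-/

section SeparateContinuity

variable {X Y : Type*} [TopologicalSpace X] [TopologicalSpace Y]

theorem continuous_sigmaTop_prodMk_left (x : X) :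
    Continuous[_, sigmaTop X Y] fun y : Y => (x, y) :=
  continuous_iInf_rng.2 fun f => continuous_induced_rng.2 (f.2.1 x)

theorem continuous_sigmaTop_prodMk_right (y : Y) :
    Continuous[_, sigmaTop X Y] fun x : X => (x, y) :=
  continuous_iInf_rng.2 fun f => continuous_induced_rng.2 (f.2.2 y)

theorem continuous_sigmaTop_iff_sepCont (f : X × Y → ℝ) :
    Continuous[sigmaTop X Y, _] f ↔ SepCont f :=
  ⟨fun hf => ⟨fun x => @Continuous.comp _ _ _ _ (sigmaTop X Y) _ _ _ hf
      (continuous_sigmaTop_prodMk_left x),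
    fun y => @Continuous.comp _ _ _ _ (sigmaTop X Y) _ _ _ hf
      (continuous_sigmaTop_prodMk_right y)⟩,
   fun hf => continuous_iInf_dom (i := ⟨f, hf⟩) continuous_induced_dom⟩

theorem cp_sigmaTop_eq_sCp : @Cp (X × Y) ℝ (sigmaTop X Y) _ _ _ _ _ = SCp X Y :=
  Submodule.ext continuous_sigmaTop_iff_sepCont

theorem SepCont.continuous_curry {f : X × Y → ℝ} (hf : SepCont f) :
    Continuous fun x => (⟨fun y => f (x, y), hf.1 x⟩ : Cp Y ℝ) :=
  (continuous_pi hf.2).subtype_mk _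

theorem Continuous.sepCont_uncurry {g : X → Cp Y ℝ} (hg : Continuous g) :
    SepCont fun p : X × Y => (g p.1).1 p.2 :=
  ⟨fun x => (g x).2, fun y => (continuous_apply y).comp (continuous_subtype_val.comp hg)⟩

def SCp.curryEquiv : SCp X Y ≃L[ℝ] Cp X (Cp Y ℝ) where
  toFun f := ⟨fun x => ⟨fun y => f.1 (x, y), f.2.1 x⟩, f.2.continuous_curry⟩
  invFun g := ⟨fun p => (g.1 p.1).1 p.2, g.2.sepCont_uncurry⟩
  map_add' _ _ := rfl
  map_smul' _ _ := rfl
  left_inv _ := rfl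
  right_inv _ := rfl
  continuous_toFun := by
    refine Continuous.subtype_mk (continuous_pi fun x => ?_) _
    refine Continuous.subtype_mk (continuous_pi fun y => ?_) _
    exact (continuous_apply (x, y)).comp continuous_subtype_val
  continuous_invFun := by
    refine Continuous.subtype_mk (continuous_pi fun p => ?_) _
    exact (continuous_apply p.2).comp <| continuous_subtype_val.comp <|
      (continuous_apply p.1).comp continuous_subtype_val

end SeparateContinuity

theorem statement1_general (X Y : Type*) [TopologicalSpace X]
    [TopologicalSpace Y] :
    Nonempty (↥(@Cp (X × Y) ℝ (sigmaTop X Y) _ _ _ _ _) ≃L[ℝ] ↥(Cp X ↥(Cp Y ℝ))) :=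
  ⟨(ContinuousLinearEquiv.ofEq _ _ cp_sigmaTop_eq_sCp).trans SCp.curryEquiv⟩

/-- For Tychonoff spaces `X` and `Y`, the space `C_p(X×Y, σ)` of
`σ`-continuous real-valued functions on `X × Y` with the topology of pointwise convergence
is linearly homeomorphic to `C_p(X, C_p(Y))`. -/
theorem statement1 (X Y : Type*) [TopologicalSpace X] [T35Space X]
    [TopologicalSpace Y] [T35Space Y] :
    Nonempty (↥(@Cp (X × Y) ℝ (sigmaTop X Y) _ _ _ _ _) ≃L[ℝ] ↥(Cp X ↥(Cp Y ℝ))) :=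
  statement1_general X Y
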